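/- Let V and W be varieties of Ω-algebras of the same type without nullary operation symbols. For any equational base Σ of V, the Mal'tsev product V ∘ W is contained in the variety U defined by the set of identities Σ^p. -/

import Mathlib

structure Signature where
  symbols : Type
  arity : symbols → ℕ

structure Alg (S : Signature) where
  carrier : Type
  op : ∀ ω : S.symbols, (Fin (S.arity ω) → carrier) → carrier
  nonempty : Nonempty carrier

inductive Term (S : Signature) (X : Type) : Type
  | var : X → Term S X
  | app : ∀ ω : S.symbols, (Fin (S.arity ω) → Term S X) → Term S X

def Term.eval {S : Signature} {X : Type} (A : Alg S) (env : X → A.carrier) :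
    Term S X → A.carrier
  | .var x => env x
  | .app ω ts => A.op ω fun i => (ts i).eval A env

/-- The algebra `A` satisfies the identity `u = v`. -/
def Alg.sat {S : Signature} (A : Alg S) {X : Type} (u v : Term S X) : Prop :=
  ∀ env : X → A.carrier, u.eval A env = v.eval A env

/-- An identity: a pair of terms in the countably many variables `x₀, x₁, …`. -/
abbrev Ident (S : Signature) := Term S ℕ × Term S ℕ

/-- `A` lies in the variety axiomatized by the set of identities `E`. -/
def Alg.Models {S : Signature} (A : Alg S) (E : Set (Ident S)) : Prop :=
  ∀ e ∈ E, A.sat e.1 e.2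

/-- The identity `u = v` holds in the variety axiomatized by `E`. -/
def Conseq {S : Signature} (E : Set (Ident S)) {X : Type} (u v : Term S X) : Prop :=
  ∀ A : Alg S, A.Models E → A.sat u v

/-- `a` is an idempotent element of `A`. -/
def Alg.IsIdem {S : Signature} (A : Alg S) (a : A.carrier) : Prop :=
  ∀ ω : S.symbols, A.op ω (fun _ => a) = a

/-- `B` is (the universe of) a subalgebra of `A`. -/
def Alg.IsSubuniverse {S : Signature} (A : Alg S) (B : Set A.carrier) : Prop :=
  ∀ ω (a : Fin (S.arity ω) → A.carrier), (∀ i, a i ∈ B) → A.op ω a ∈ B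

/-- The subalgebra of `A` on a nonempty subuniverse `B`. -/
def Alg.subAlg {S : Signature} (A : Alg S) (B : Set A.carrier)
    (h : A.IsSubuniverse B) (hne : B.Nonempty) : Alg S where
  carrier := B
  op ω a := ⟨A.op ω fun i => (a i : A.carrier), h ω _ fun i => (a i).2⟩
  nonempty := hne.to_subtype

/-- A congruence of `A`: an equivalence relation compatible with all operations. -/
structure Congruence {S : Signature} (A : Alg S) where
  rel : A.carrier → A.carrier → Prop
  iseqv : Equivalence rel
  compat : ∀ ω (a b : Fin (S.arity ω) → A.carrier),
    (∀ i, rel (a i) (b i)) → rel (A.op ω a) (A.op ω b)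

def Congruence.setoid {S : Signature} {A : Alg S} (θ : Congruence A) :
    Setoid A.carrier := ⟨θ.rel, θ.iseqv⟩

/-- The quotient algebra `A/θ`. -/
noncomputable def Alg.quot {S : Signature} (A : Alg S) (θ : Congruence A) : Alg S where
  carrier := Quotient θ.setoid
  op ω q := Quotient.mk θ.setoid (A.op ω fun i => (q i).out)
  nonempty := A.nonempty.map (Quotient.mk θ.setoid)

/-- Membership in the Mal'tsev product of the varieties axiomatized by `V` and `W`:
`A` has a congruence `θ` with `A/θ` in (the variety of) `W` such that every
`θ`-class which is a subalgebra of `A` is an algebra in (the variety of) `V`. -/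
def InMaltsev {S : Signature} (V W : Set (Ident S)) (A : Alg S) : Prop :=
  ∃ θ : Congruence A, (A.quot θ).Models W ∧
    ∀ a : A.carrier, ∀ h : A.IsSubuniverse {b | θ.rel a b},
      (A.subAlg {b | θ.rel a b} h ⟨a, θ.iseqv.refl a⟩).Models V

/-- A class of algebras is a variety iff it is axiomatized by some set of identities. -/
def IsVarietyClass {S : Signature} (K : Alg S → Prop) : Prop :=
  ∃ E : Set (Ident S), ∀ A : Alg S, K A ↔ A.Models E

def Term.subst {S : Signature} {X Y : Type} (f : X → Term S Y) :
    Term S X → Term S Y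
  | .var x => f x
  | .app ω ts => .app ω fun i => (ts i).subst f

/-- The set `σᵖ` of identities obtained from the identity `σ` by substituting for
its variables pairwise `W`-equivalent term idempotents of (the variety of) `W`. -/
def sigmaP {S : Signature} (W : Set (Ident S)) (σ : Ident S) : Set (Ident S) :=
  { e | ∃ r : ℕ → Term S ℕ,
      (∀ i j : ℕ, Conseq W (r i) (r j)) ∧
      (∀ ω : S.symbols, Conseq W (Term.app ω fun _ => r 0) (r 0)) ∧
      e = (σ.1.subst r, σ.2.subst r) }

/-- `Σᵖ = ⋃_{σ ∈ Σ} σᵖ`. -/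
def SigmaP {S : Signature} (W : Set (Ident S)) (Sg : Set (Ident S)) :
    Set (Ident S) :=
  ⋃ σ ∈ Sg, sigmaP W σ

/-!
Let `A ∈ V ∘ W` via the congruence `θ`, and let `r₀, r₁, …` be pairwise `W`-equivalent
`W`-idempotent terms. Since `A/θ ∈ W`, under any assignment the values of the `rᵢ` lie in a
single `θ`-class, and this class is an idempotent of `A/θ`, hence a subalgebra of `A`. That
subalgebra lies in `V`, so it satisfies every `σ ∈ Σ`; instantiating `σ` at the values of
the `rᵢ` gives exactly the corresponding identity of `σᵖ` in `A`.
-/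

namespace Term

variable {S : Signature}

lemma eval_subst {X Y : Type} (A : Alg S) (f : X → Term S Y) (env : Y → A.carrier)
    (t : Term S X) : (t.subst f).eval A env = t.eval A fun x => (f x).eval A env := by
  induction t with
  | var x => rfl
  | app ω ts ih => exact congrArg (A.op ω) (funext ih)

lemma eval_quot {X : Type} (A : Alg S) (θ : Congruence A) (env : X → A.carrier)
    (t : Term S X) :
    t.eval (A.quot θ) (fun x => Quotient.mk θ.setoid (env x))
      = Quotient.mk θ.setoid (t.eval A env) := by
  induction t with
  | var x => rfl
  | app ω ts ih =>
    exact Quotient.sound <| θ.compat ω _ _ fun i =>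
      Quotient.exact ((Quotient.out_eq _).trans (ih i))

lemma val_eval_subAlg {X : Type} (A : Alg S) {B : Set A.carrier} (h : A.IsSubuniverse B)
    (hne : B.Nonempty) (env : X → B) (t : Term S X) :
    Subtype.val (p := (· ∈ B)) (t.eval (A.subAlg B h hne) env)
      = t.eval A fun x => (env x : A.carrier) := by
  induction t with
  | var x => rfl
  | app ω ts ih => exact congrArg (A.op ω) (funext ih)

end Term

namespace Congruence

variable {S : Signature} {A : Alg S} (θ : Congruence A)

lemma rel_eval_of_quot_sat {X : Type} {u v : Term S X} (huv : (A.quot θ).sat u v)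
    (env : X → A.carrier) : θ.rel (u.eval A env) (v.eval A env) := by
  have := huv fun x => Quotient.mk θ.setoid (env x)
  rw [Term.eval_quot, Term.eval_quot] at this
  exact Quotient.exact this

lemma isSubuniverse_class {a : A.carrier} (hidem : ∀ ω, θ.rel (A.op ω fun _ => a) a) :
    A.IsSubuniverse {b | θ.rel a b} := fun ω _ hc =>
  θ.iseqv.trans (θ.iseqv.symm (hidem ω)) (θ.compat ω _ _ hc)

end Congruence

lemma Alg.sat_of_subAlg_sat {S : Signature} (A : Alg S) {B : Set A.carrier}
    (h : A.IsSubuniverse B) (hne : B.Nonempty) {X : Type} {u v : Term S X}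
    (huv : (A.subAlg B h hne).sat u v) (env : X → B) :
    u.eval A (fun x => (env x : A.carrier)) = v.eval A fun x => (env x : A.carrier) := by
  rw [← Term.val_eval_subAlg A h hne, ← Term.val_eval_subAlg A h hne, huv env]

theorem stmt_4_general (S : Signature)
    (V W : Set (Ident S)) (Sg : Set (Ident S))
    (hbase : ∀ A : Alg S, A.Models V ↔ A.Models Sg) :
    ∀ A : Alg S, InMaltsev V W A → A.Models (SigmaP W Sg) := by
  rintro A ⟨θ, hquot, hclass⟩ e he env
  rw [SigmaP, Set.mem_iUnion₂] at he
  obtain ⟨σ, hσ, r, hequiv, hidem, rfl⟩ := he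
  set a : ℕ → A.carrier := fun i => (r i).eval A env
  have hsub : A.IsSubuniverse {b | θ.rel (a 0) b} :=
    θ.isSubuniverse_class fun ω => θ.rel_eval_of_quot_sat (hidem ω _ hquot) env
  have hSg := (hbase _).mp (hclass (a 0) hsub)
  have hσA := A.sat_of_subAlg_sat hsub _ (hSg σ hσ)
    fun i => ⟨a i, θ.rel_eval_of_quot_sat (hequiv 0 i _ hquot) env⟩
  simpa only [Term.eval_subst] using hσA

/-- If `Σ` is an equational base of the variety `V` (i.e. the
models of `Σ` are exactly the members of `V`), then the Mal'tsev product `V ∘ W`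
is contained in the variety `U` defined by the identities `Σᵖ`. -/
theorem stmt_4 (S : Signature) (h0 : ∀ ω : S.symbols, 0 < S.arity ω)
    (V W : Set (Ident S)) (Sg : Set (Ident S))
    (hbase : ∀ A : Alg S, A.Models V ↔ A.Models Sg) :
    ∀ A : Alg S, InMaltsev V W A → A.Models (SigmaP W Sg) :=
  stmt_4_general S V W Sg hbase
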